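/- For every integer i ≥ 2, with m = ⌈log₂(i−1)⌉, the following exact identity holds: Σ_{t=1}^{i−1} 2^{⌈log₂ t⌉} = i·2^m − 4^m/3 − 2^m + 1/3. -/

import Mathlib

/-!
Between consecutive powers of `b`, `t ↦ ⌈log_b t⌉` is constant, so passing from `n` to `n + 1`
adds `b ^ M` (with `M = ⌈log_b n⌉`) to the sum, except when `n = b ^ M`, where the exponent jumps
and the correction term picks up `(b - 1) b ^ (2M)`. For `b = 2` the correction is the geometric
sum `∑_{j<M} 4 ^ j = (4 ^ M - 1) / 3`.
-/

open Finset

namespace Nat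

theorem clog_pow_add_one {b : ℕ} (hb : 1 < b) (m : ℕ) : clog b (b ^ m + 1) = m + 1 := by
  refine le_antisymm ((clog_le_iff_le_pow hb).2 ?_) ((lt_clog_iff_pow_lt hb).2 (lt_add_one _))
  rw [pow_succ]
  nlinarith [one_le_pow m b (by omega)]

theorem sum_Icc_pow_clog {R : Type*} [CommRing R] {b : ℕ} (hb : 1 < b) (n : ℕ) :
    ∑ t ∈ Icc 1 n, (b : R) ^ clog b t
      = n * b ^ clog b n - (b - 1) * ∑ j ∈ range (clog b n), ((b : R) ^ 2) ^ j := by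
  induction n with
  | zero => simp
  | succ n ih =>
    rw [sum_Icc_succ_top (by omega), ih]
    set M := clog b n
    by_cases hn : b ^ M = n
    · have hM : clog b (n + 1) = M + 1 := by rw [← hn, clog_pow_add_one hb]
      rw [hM, sum_range_succ, ← hn]
      push_cast
      ring
    · rw [← (clog_eq_clog_succ_iff hb).2 hn]
      push_cast
      ring

end Nat

/-- closed form for `Σ_{t=1}^{i-1} 2^⌈log₂ t⌉` with `m = ⌈log₂(i-1)⌉`.
Here `⌈log₂ t⌉` is `Nat.clog 2 t`. -/
theorem sum_two_pow_clog_closed_form (i : ℕ) (hi : 2 ≤ i) (m : ℕ)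
    (hm : m = Nat.clog 2 (i - 1)) :
    ∑ t ∈ Finset.Icc 1 (i - 1), (2 : ℝ) ^ (Nat.clog 2 t)
      = (i : ℝ) * (2 : ℝ)^m - (4 : ℝ)^m / 3 - (2 : ℝ)^m + 1/3 := by
  have h := Nat.sum_Icc_pow_clog (R := ℝ) one_lt_two (i - 1)
  push_cast at h
  rw [h, ← hm, Nat.cast_sub (by omega), geom_sum_eq (by norm_num)]
  ring
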